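/- arXiv:1201.6681 — 6 statements merged into one kernel-verified Lean document; each statement's English description precedes it below -/
import Mathlib

section
/- Let Σ_W be an n×n real positive definite matrix, Σ_Ṽ an n×n real positive definite matrix, and μ > 1. Then there exists an n×n positive semidefinite matrix K such that, defining Σ_W̃ = (Σ_W⁻¹ + K)⁻¹ and Σ_{X*} = (μ−1)⁻¹·Σ_Ṽ − Σ_W̃, we have: (i) Σ_W̃ ⪯ (μ−1)⁻¹·Σ_Ṽ, and (ii) K·Σ_{X*} = Σ_{X*}·K = 0. -/
/-!
Whitening by `M = S ^ (1/2)` reduces the problem to `S = 1` and `B = M A M`. There,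
`K = max (1 - B) 0` in the functional calculus of `B` gives `B + K = max B 1`, so
`1 - (B + K)⁻¹ = 1 - (max B 1)⁻¹` is positive semidefinite; it vanishes on the spectral
subspace where `B ≤ 1` while `K` vanishes where `B ≥ 1`, hence the two products are zero.
-/

open scoped MatrixOrder ComplexOrder

namespace Matrix

variable {ι 𝕜 : Type*} [Fintype ι] [DecidableEq ι] [RCLike 𝕜]

theorem IsHermitian.exists_posSemidef_complementary_slack_one {B : Matrix ι ι 𝕜}
    (hB : B.IsHermitian) :
    ∃ K : Matrix ι ι 𝕜, K.PosSemidef ∧ (1 - (B + K)⁻¹).PosSemidef ∧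
      K * (1 - (B + K)⁻¹) = 0 ∧ (1 - (B + K)⁻¹) * K = 0 := by
  have hB' : IsSelfAdjoint B := hB
  set e : ℝ → ℝ := fun x => max (1 - x) 0
  set g : ℝ → ℝ := fun x => 1 - (max x 1)⁻¹
  have hinv_cont : Continuous fun x : ℝ => (max x 1)⁻¹ :=
    (continuous_id.max continuous_const).inv₀ fun x => by positivity
  have hg_cont : ContinuousOn g (spectrum ℝ B) := (continuous_const.sub hinv_cont).continuousOn
  have hBK : B + cfc e B = cfc (fun x : ℝ => max x 1) B :=
    calc B + cfc e B = cfc (fun x => x + e x) B := by rw [cfc_add B (fun x => x) e, cfc_id' ℝ B]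
      _ = _ := cfc_congr fun x _ => by
        rw [← max_add_add_left, add_sub_cancel, add_zero, max_comm]
  have hgap : 1 - (B + cfc e B)⁻¹ = cfc g B := by
    rw [cfc_sub (fun _ => 1) (fun x : ℝ => (max x 1)⁻¹) B (hg := hinv_cont.continuousOn),
      cfc_const_one ℝ B]
    congr 1
    refine inv_eq_right_inv ?_
    rw [hBK, ← cfc_mul (fun x : ℝ => max x 1) (fun x : ℝ => (max x 1)⁻¹) B
      (hg := hinv_cont.continuousOn), ← cfc_one ℝ B]
    exact cfc_congr fun x _ => mul_inv_cancel₀ (by positivity)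
  have he_mul_g : ∀ x, e x * g x = 0 := by
    intro x
    rcases le_total x 1 with h | h
    · simp [e, g, max_eq_right h]
    · simp [e, g, max_eq_right (sub_nonpos.mpr h)]
  refine ⟨cfc e B, ?_, ?_, ?_, ?_⟩
  · exact nonneg_iff_posSemidef.mp (cfc_nonneg fun x _ => le_max_right _ _)
  · rw [hgap]
    exact nonneg_iff_posSemidef.mp <| cfc_nonneg fun x _ =>
      sub_nonneg.mpr (inv_le_one_of_one_le₀ (le_max_right _ _))
  · rw [hgap, ← cfc_mul e g B, ← cfc_zero ℝ B]
    exact cfc_congr fun x _ => he_mul_g x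
  · rw [hgap, ← cfc_mul g e B, ← cfc_zero ℝ B]
    exact cfc_congr fun x _ => (mul_comm _ _).trans (he_mul_g x)

theorem IsHermitian.exists_posSemidef_complementary_slack {A S : Matrix ι ι 𝕜}
    (hA : A.IsHermitian) (hS : S.PosDef) :
    ∃ K : Matrix ι ι 𝕜, K.PosSemidef ∧ (S - (A + K)⁻¹).PosSemidef ∧
      K * (S - (A + K)⁻¹) = 0 ∧ (S - (A + K)⁻¹) * K = 0 := by
  set M := CFC.sqrt S
  have hMH : Mᴴ = M := (CFC.sqrt_nonneg S).isSelfAdjoint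
  have hMM : M * M = S := CFC.sqrt_mul_sqrt_self S hS.posSemidef.nonneg
  have hMu : IsUnit M.det :=
    (isUnit_iff_isUnit_det M).mp ((CFC.isUnit_sqrt_iff S hS.posSemidef.nonneg).mpr hS.isUnit)
  have hB : (M * A * M).IsHermitian := by
    simpa only [hMH] using isHermitian_conjTranspose_mul_mul M hA
  obtain ⟨L, hL, hgap, hLgap, hgapL⟩ := hB.exists_posSemidef_complementary_slack_one
  set G := 1 - (M * A * M + L)⁻¹
  have hAK : A + M⁻¹ * L * M⁻¹ = M⁻¹ * (M * A * M + L) * M⁻¹ := by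
    rw [mul_add, add_mul]
    simp only [mul_assoc, nonsing_inv_mul_cancel_left _ _ hMu, mul_nonsing_inv _ hMu, mul_one]
  have hSgap : S - (A + M⁻¹ * L * M⁻¹)⁻¹ = M * G * M := by
    rw [hAK, mul_inv_rev, mul_inv_rev, nonsing_inv_nonsing_inv M hMu, ← hMM]
    simp only [G, mul_sub, sub_mul, mul_one, mul_assoc]
  refine ⟨M⁻¹ * L * M⁻¹, ?_, ?_, ?_, ?_⟩
  · simpa only [conjTranspose_nonsing_inv, hMH] using hL.conjTranspose_mul_mul_same M⁻¹
  · simpa only [hSgap, hMH] using hgap.conjTranspose_mul_mul_same M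
  · rw [hSgap]
    simp only [mul_assoc, nonsing_inv_mul_cancel_left _ _ hMu]
    rw [← mul_assoc L, hLgap, zero_mul, mul_zero]
  · rw [hSgap]
    simp only [mul_assoc, mul_nonsing_inv_cancel_left _ _ hMu]
    rw [← mul_assoc G L, hgapL, zero_mul, mul_zero]

end Matrix

theorem stmt_3 (n : ℕ) (SW SV : Matrix (Fin n) (Fin n) ℝ)
    (hW : SW.PosDef) (hV : SV.PosDef) (μ : ℝ) (hμ : 1 < μ) :
    ∃ K : Matrix (Fin n) (Fin n) ℝ, K.PosSemidef ∧
      ((μ - 1)⁻¹ • SV - (SW⁻¹ + K)⁻¹).PosSemidef ∧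
      K * ((μ - 1)⁻¹ • SV - (SW⁻¹ + K)⁻¹) = 0 ∧
      ((μ - 1)⁻¹ • SV - (SW⁻¹ + K)⁻¹) * K = 0 :=
  hW.inv.isHermitian.exists_posSemidef_complementary_slack
    (hV.smul (inv_pos.mpr (sub_pos.mpr hμ)))
end

section
/- Let Σ_W be an n×n positive definite matrix and K an n×n positive semidefinite matrix, and let Σ_{X*} be a positive semidefinite matrix with K·Σ_{X*} = Σ_{X*}·K = 0. Define Σ_W̃ = (Σ_W⁻¹ + K)⁻¹. Then (Σ_{X*} + Σ_W̃)⁻¹ = (Σ_{X*} + Σ_W)⁻¹ + K. -/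
/-!
With `a = w⁻¹ + k` and `b = x + w`, the annihilation `k x = 0` gives the factorisation
`x + a⁻¹ = a⁻¹ (a x + 1) = a⁻¹ w⁻¹ b`, so `x + a⁻¹` is a product of units with inverse
`b⁻¹ w a = b⁻¹ (1 + w k)`; finally `x k = 0` turns `b⁻¹ w k` into `b⁻¹ b k = k`.
-/

open Matrix

open scoped Ring

namespace Ring

variable {R : Type*} [Ring R] {w k x : R}

theorem add_inverse_inverse_add_eq_mul (hw : IsUnit w) (ha : IsUnit (w⁻¹ʳ + k))
    (hkx : k * x = 0) :
    x + (w⁻¹ʳ + k)⁻¹ʳ = (w⁻¹ʳ + k)⁻¹ʳ * (w⁻¹ʳ * (x + w)) := by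
  have hax : (w⁻¹ʳ + k) * x = w⁻¹ʳ * x := by rw [add_mul, hkx, add_zero]
  rw [mul_add w⁻¹ʳ, inverse_mul_cancel w hw, ← hax, mul_add, inverse_mul_cancel_left _ _ ha,
    mul_one]

theorem inverse_add_mul_mul_inverse_add (hw : IsUnit w) (hb : IsUnit (x + w)) (hxk : x * k = 0) :
    (x + w)⁻¹ʳ * (w * (w⁻¹ʳ + k)) = (x + w)⁻¹ʳ + k := by
  have hbk : (x + w) * k = w * k := by rw [add_mul, hxk, zero_add]
  rw [mul_add w, mul_inverse_cancel w hw, ← hbk, mul_add, mul_one,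
    inverse_mul_cancel_left _ _ hb]

theorem inverse_add_inverse_inverse_add (hw : IsUnit w) (ha : IsUnit (w⁻¹ʳ + k))
    (hb : IsUnit (x + w)) (hkx : k * x = 0) (hxk : x * k = 0) :
    (x + (w⁻¹ʳ + k)⁻¹ʳ)⁻¹ʳ = (x + w)⁻¹ʳ + k := by
  rw [add_inverse_inverse_add_eq_mul hw ha hkx, inverse_mul (Or.inl ha.ringInverse),
    inverse_mul (Or.inl hw.ringInverse), inverse_inverse hw, inverse_inverse ha, mul_assoc,
    inverse_add_mul_mul_inverse_add hw hb hxk]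

end Ring

theorem stmt_5 (n : ℕ) (SW K SXs : Matrix (Fin n) (Fin n) ℝ)
    (hW : SW.PosDef) (hK : K.PosSemidef) (hXs : SXs.PosSemidef)
    (hKX : K * SXs = 0) (hXK : SXs * K = 0) :
    (SXs + (SW⁻¹ + K)⁻¹)⁻¹ = (SXs + SW)⁻¹ + K := by
  have ha : IsUnit (SW⁻¹ʳ + K) := by
    simpa only [nonsing_inv_eq_ringInverse] using (hW.inv.add_posSemidef hK).isUnit
  simp only [nonsing_inv_eq_ringInverse]
  exact Ring.inverse_add_inverse_inverse_add hW.isUnit ha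
    (PosDef.posSemidef_add hXs hW).isUnit hKX hXK
end

section
/- Let Σ_{X*}, Σ_W̃, Σ_W be n×n real symmetric matrices with Σ_{X*} + Σ_W̃ and Σ_{X*} + Σ_W positive definite, and suppose (Σ_{X*} + Σ_W̃)⁻¹ = (Σ_{X*} + Σ_W)⁻¹ + K where K is a matrix satisfying K·Σ_{X*} = Σ_{X*}·K = 0. Setting Σ_{Y1} = Σ_{X*}, Σ_{Y2} = Σ_{X*} + Σ_W̃, Σ_{Y3} = Σ_{X*} + Σ_W, we have Σ_{Y1} − Σ_{Y2}·Σ_{Y3}⁻¹·Σ_{Y1} = 0 and Σ_{Y1} − Σ_{Y1}·Σ_{Y3}⁻¹·Σ_{Y2} = 0. -/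
open Matrix

namespace Matrix

variable {n m α : Type*} [Fintype n] [DecidableEq n] [CommRing α]

theorem mul_mul_eq_self_of_inv_eq_add {A B K : Matrix n n α} {X : Matrix n m α}
    (hA : IsUnit A.det) (hinv : A⁻¹ = B + K) (hKX : K * X = 0) : A * B * X = X :=
  calc A * B * X = A * (A⁻¹ * X) := by rw [Matrix.mul_assoc, hinv, Matrix.add_mul, hKX, add_zero]
    _ = X := mul_nonsing_inv_cancel_left A X hA

theorem mul_mul_eq_self_of_inv_eq_add' {A B K : Matrix n n α} {X : Matrix m n α}
    (hA : IsUnit A.det) (hinv : A⁻¹ = B + K) (hXK : X * K = 0) : X * B * A = X :=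
  calc X * B * A = X * A⁻¹ * A := by rw [hinv, Matrix.mul_add, hXK, add_zero]
    _ = X := nonsing_inv_mul_cancel_right A X hA

end Matrix

theorem stmt_6_general (n : ℕ) (SXs SWt SW K : Matrix (Fin n) (Fin n) ℝ)
    (h1 : (SXs + SWt).PosDef)
    (hinv : (SXs + SWt)⁻¹ = (SXs + SW)⁻¹ + K)
    (hKX : K * SXs = 0) (hXK : SXs * K = 0) :
    SXs - (SXs + SWt) * (SXs + SW)⁻¹ * SXs = 0 ∧
    SXs - SXs * (SXs + SW)⁻¹ * (SXs + SWt) = 0 := by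
  have hdet : IsUnit (SXs + SWt).det := h1.det_pos.ne'.isUnit
  exact ⟨sub_eq_zero.mpr (mul_mul_eq_self_of_inv_eq_add hdet hinv hKX).symm,
    sub_eq_zero.mpr (mul_mul_eq_self_of_inv_eq_add' hdet hinv hXK).symm⟩

theorem stmt_6 (n : ℕ) (SXs SWt SW K : Matrix (Fin n) (Fin n) ℝ)
    (hXs : SXs.IsSymm) (hWt : SWt.IsSymm) (hW : SW.IsSymm)
    (h1 : (SXs + SWt).PosDef) (h2 : (SXs + SW).PosDef)
    (hinv : (SXs + SWt)⁻¹ = (SXs + SW)⁻¹ + K)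
    (hKX : K * SXs = 0) (hXK : SXs * K = 0) :
    SXs - (SXs + SWt) * (SXs + SW)⁻¹ * SXs = 0 ∧
    SXs - SXs * (SXs + SW)⁻¹ * (SXs + SWt) = 0 :=
  stmt_6_general n SXs SWt SW K h1 hinv hKX hXK
end

section
/- Let Σ_X be positive definite n×n and Σ_W positive definite n×n, and μ > 1. Let Q be non-singular with Qᵀ·Σ_X·Q = I and Qᵀ·Σ_W·Q = D_W diagonal with entries d_i > 0. Define the diagonal matrix D_L with entries d_{L,i} = 0 if d_i ≤ μ−1 and d_{L,i} = (d_i − (μ−1))/(μ·(1 + d_i)) if d_i > μ−1, and set L = Q·D_L·Qᵀ. Then L is positive semidefinite and (Σ_X + Σ_W)⁻¹ + L ⪰ μ⁻¹·Σ_X⁻¹. -/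
/-!
Congruence by `Q` diagonalises everything at once: `SX⁻¹ = Q Qᵀ` and
`(SX + SW)⁻¹ = Q diag((1 + dᵢ)⁻¹) Qᵀ`. Moreover `d_{L,i} = max 0 (μ⁻¹ - (1 + dᵢ)⁻¹)`, so both
conclusions reduce to nonnegativity of the diagonal entries `d_{L,i}` and
`(1 + dᵢ)⁻¹ + d_{L,i} - μ⁻¹`.
-/

open Matrix

theorem Matrix.posSemidef_mul_diagonal_mul_transpose {m ι : Type*} [Finite m] [Fintype ι]
    [DecidableEq ι] (Q : Matrix m ι ℝ) {v : ι → ℝ} (hv : 0 ≤ v) :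
    (Q * diagonal v * Qᵀ).PosSemidef := by
  simpa using (posSemidef_diagonal_iff.mpr hv).mul_mul_conjTranspose_same Q

theorem Matrix.inv_eq_of_transpose_mul_mul_eq_diagonal {ι K : Type*} [Fintype ι]
    [DecidableEq ι] [Field K] {S Q : Matrix ι ι K} [Invertible Q] {c : ι → K}
    (hc : ∀ i, c i ≠ 0) (h : Qᵀ * S * Q = diagonal c) :
    S⁻¹ = Q * diagonal c⁻¹ * Qᵀ := by
  have hS : S = Qᵀ⁻¹ * diagonal c * Q⁻¹ := by
    rw [← h]; simp [Matrix.mul_assoc]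
  have hc_inv : (diagonal c)⁻¹ = diagonal c⁻¹ := inv_eq_left_inv <| by
    rw [diagonal_mul_diagonal, ← diagonal_one]
    exact congrArg diagonal (funext fun i => inv_mul_cancel₀ (hc i))
  rw [hS, Matrix.mul_inv_rev, Matrix.mul_inv_rev, hc_inv, inv_inv_of_invertible]
  simp [Matrix.mul_assoc]

theorem ite_eq_max_inv_sub_inv {μ d : ℝ} (hμ : 0 < μ) (hd : 0 < 1 + d) :
    (if d ≤ μ - 1 then 0 else (d - (μ - 1)) / (μ * (1 + d))) = max 0 (μ⁻¹ - (1 + d)⁻¹) := by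
  split_ifs with h
  · rw [max_eq_left]
    linarith [inv_anti₀ hd (by linarith : 1 + d ≤ μ)]
  · have hgap : (1 + d)⁻¹ < μ⁻¹ := inv_strictAnti₀ hμ (by linarith)
    rw [max_eq_right (by linarith)]
    field_simp
    ring

theorem stmt_10_general (n : ℕ) (SX SW Q : Matrix (Fin n) (Fin n) ℝ) (d : Fin n → ℝ)
    (μ : ℝ) (hμ : 1 < μ)
    (hQX : Qᵀ * SX * Q = 1)
    (hQW : Qᵀ * SW * Q = Matrix.diagonal d) (hd : ∀ i, 0 < d i)
    (dL : Fin n → ℝ)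
    (hdL : ∀ i, dL i = if d i ≤ μ - 1 then 0 else (d i - (μ - 1)) / (μ * (1 + d i))) :
    (Q * Matrix.diagonal dL * Qᵀ).PosSemidef ∧
      ((SX + SW)⁻¹ + Q * Matrix.diagonal dL * Qᵀ - μ⁻¹ • SX⁻¹).PosSemidef := by
  have hd1 : ∀ i, 0 < 1 + d i := fun i => by linarith [hd i]
  have hdL_max : ∀ i, dL i = max 0 (μ⁻¹ - (1 + d i)⁻¹) := fun i =>
    (hdL i).trans (ite_eq_max_inv_sub_inv (by linarith) (hd1 i))
  have : Invertible Q := invertibleOfLeftInverse Q (Qᵀ * SX) hQX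
  have hSX : SX⁻¹ = Q * diagonal 1⁻¹ * Qᵀ :=
    inv_eq_of_transpose_mul_mul_eq_diagonal (c := 1) (fun _ => one_ne_zero)
      (hQX.trans diagonal_one.symm)
  have hSXW : (SX + SW)⁻¹ = Q * diagonal (fun i => 1 + d i)⁻¹ * Qᵀ := by
    refine inv_eq_of_transpose_mul_mul_eq_diagonal (fun i => (hd1 i).ne') ?_
    rw [Matrix.mul_add, Matrix.add_mul, hQX, hQW, ← diagonal_one, diagonal_add]
  have hcongr : (SX + SW)⁻¹ + Q * diagonal dL * Qᵀ - μ⁻¹ • SX⁻¹ =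
      Q * diagonal (fun i => (1 + d i)⁻¹ + dL i - μ⁻¹) * Qᵀ := by
    rw [hSXW, hSX, ← Matrix.smul_mul, ← Matrix.mul_smul, ← Matrix.add_mul, ← Matrix.mul_add,
      ← Matrix.sub_mul, ← Matrix.mul_sub]
    congr 2
    ext i j
    by_cases hij : i = j <;> simp [hij]
  refine ⟨posSemidef_mul_diagonal_mul_transpose Q fun i => ?_, ?_⟩
  · rw [hdL_max]; exact le_max_left _ _
  · rw [hcongr]
    refine posSemidef_mul_diagonal_mul_transpose Q fun i => ?_
    have := le_max_right 0 (μ⁻¹ - (1 + d i)⁻¹)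
    simp only [Pi.zero_apply, hdL_max]
    linarith

theorem stmt_10 (n : ℕ) (SX SW Q : Matrix (Fin n) (Fin n) ℝ) (d : Fin n → ℝ)
    (hX : SX.PosDef) (hW : SW.PosDef) (μ : ℝ) (hμ : 1 < μ)
    (hQ : IsUnit Q.det) (hQX : Qᵀ * SX * Q = 1)
    (hQW : Qᵀ * SW * Q = Matrix.diagonal d) (hd : ∀ i, 0 < d i)
    (dL : Fin n → ℝ)
    (hdL : ∀ i, dL i = if d i ≤ μ - 1 then 0 else (d i - (μ - 1)) / (μ * (1 + d i))) :
    (Q * Matrix.diagonal dL * Qᵀ).PosSemidef ∧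
      ((SX + SW)⁻¹ + Q * Matrix.diagonal dL * Qᵀ - μ⁻¹ • SX⁻¹).PosSemidef :=
  stmt_10_general n SX SW Q d μ hμ hQX hQW hd dL hdL
end

section
/- With the notation of the previous construction (Σ_X ≻ 0, Σ_W ≻ 0, Q with QᵀΣ_X Q = I, QᵀΣ_W Q = D_W, L = Q·D_L·Qᵀ as defined with d_{L,i} = 0 if d_i ≤ μ−1 and (d_i−(μ−1))/(μ(1+d_i)) otherwise), define Σ_W̃ = ((Σ_X + Σ_W)⁻¹ + L)⁻¹ − Σ_X and Σ_{X'} = Σ_X − (μ−1)⁻¹·Σ_W̃. Then Σ_{X'}·L = L·Σ_{X'} = 0. -/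
/-!
Write `Σ_X = Pᵀ P`, `Σ_W = Pᵀ D_W P` with `P = Q⁻¹`. Every matrix of the construction is then
congruent to a diagonal one: `(Σ_X + Σ_W)⁻¹ + L = Q diag(m) Qᵀ` with
`m_i = 1/(1 + d_i) + d_{L,i} = max (1/(1 + d_i)) (1/μ)`, and `Σ_{X'} = Pᵀ diag(c) P` with
`c_i = (μ - 1/m_i)/(μ - 1)`. Since `d_{L,i} ≠ 0` forces `m_i = 1/μ`, we get `c_i d_{L,i} = 0`, and in
the products `Σ_{X'} L` and `L Σ_{X'}` the factors `P` and `Q` cancel, leaving `diag(c · d_L) = 0`.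
-/

open Matrix

/-- The diagonal entry `d_{L,i}` of the construction, as a function of `μ` and `d = d_i`. -/
noncomputable def shrink (μ d : ℝ) : ℝ :=
  if d ≤ μ - 1 then 0 else (d - (μ - 1)) / (μ * (1 + d))

theorem inv_one_add_add_shrink {μ d : ℝ} (hμ : 0 < μ) (hd : 0 < 1 + d) :
    (1 + d)⁻¹ + shrink μ d = max (1 + d)⁻¹ μ⁻¹ := by
  unfold shrink
  split_ifs with h
  · rw [add_zero, eq_comm, max_eq_left (inv_anti₀ hd (by linarith))]
  · rw [max_eq_right (inv_anti₀ hμ (by linarith))]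
    field_simp
    ring

theorem sub_inv_max_mul_shrink_eq_zero {μ d : ℝ} (hμ : 0 < μ) :
    (μ - (max (1 + d)⁻¹ μ⁻¹)⁻¹) * shrink μ d = 0 := by
  unfold shrink
  split_ifs with h
  · exact mul_zero _
  · rw [max_eq_right (inv_anti₀ hμ (by linarith)), inv_inv, sub_self, zero_mul]

section CongrDiagonal

variable {ι K : Type*} [Fintype ι] [DecidableEq ι] [Field K]

theorem Matrix.diagonal_mul_diagonal_inv {v : ι → K} (hv : ∀ i, v i ≠ 0) :
    diagonal v * diagonal v⁻¹ = 1 := by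
  rw [diagonal_mul_diagonal, ← diagonal_one]
  exact congrArg diagonal (funext fun i => mul_inv_cancel₀ (hv i))

def congrDiagonal (P : Matrix ι ι K) : (ι → K) →ₗ[K] Matrix ι ι K where
  toFun v := Pᵀ * diagonal v * P
  map_add' v w := by
    rw [← Matrix.add_mul, ← Matrix.mul_add, diagonal_add]
    rfl
  map_smul' c v := by
    rw [RingHom.id_apply, ← Matrix.smul_mul, ← Matrix.mul_smul, diagonal_smul]

theorem congrDiagonal_apply (P : Matrix ι ι K) (v : ι → K) :
    congrDiagonal P v = Pᵀ * diagonal v * P := rfl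

variable {P R : Matrix ι ι K}

theorem eq_congrDiagonal_of_transpose_mul_mul_eq {S : Matrix ι ι K} {v : ι → K}
    (hPR : P * R = 1) (h : Pᵀ * S * P = diagonal v) : S = congrDiagonal R v := by
  rw [congrDiagonal_apply, ← h]
  calc S = (P * R)ᵀ * S * (P * R) := by rw [hPR, transpose_one, Matrix.one_mul, Matrix.mul_one]
    _ = Rᵀ * (Pᵀ * S * P) * R := by rw [transpose_mul]; simp only [Matrix.mul_assoc]

theorem inv_congrDiagonal {v : ι → K} (hPR : P * Rᵀ = 1) (hv : ∀ i, v i ≠ 0) :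
    (congrDiagonal P v)⁻¹ = congrDiagonal R v⁻¹ := by
  refine inv_eq_right_inv ?_
  rw [congrDiagonal_apply, congrDiagonal_apply]
  calc Pᵀ * diagonal v * P * (Rᵀ * diagonal v⁻¹ * R)
      = Pᵀ * (diagonal v * (P * Rᵀ) * diagonal v⁻¹) * R := by simp only [Matrix.mul_assoc]
    _ = (Rᵀ * P)ᵀ := by
      rw [hPR, Matrix.mul_one, diagonal_mul_diagonal_inv hv, Matrix.mul_one, transpose_mul,
        transpose_transpose]
    _ = 1 := by rw [mul_eq_one_comm.mp hPR, transpose_one]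

theorem congrDiagonal_mul_congrDiagonal_eq_zero {v w : ι → K} (hPR : P * Rᵀ = 1)
    (h : v * w = 0) : congrDiagonal P v * congrDiagonal R w = 0 := by
  rw [congrDiagonal_apply, congrDiagonal_apply]
  calc Pᵀ * diagonal v * P * (Rᵀ * diagonal w * R)
      = Pᵀ * (diagonal v * (P * Rᵀ) * diagonal w) * R := by simp only [Matrix.mul_assoc]
    _ = 0 := by
      rw [hPR, Matrix.mul_one, diagonal_mul_diagonal, ← Pi.mul_def, h]
      simp

end CongrDiagonal

theorem stmt_11_general (n : ℕ) (SX SW Q : Matrix (Fin n) (Fin n) ℝ) (d : Fin n → ℝ)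
    (μ : ℝ) (hμ : 1 < μ)
    (hQ : IsUnit Q.det) (hQX : Qᵀ * SX * Q = 1)
    (hQW : Qᵀ * SW * Q = Matrix.diagonal d) (hd : ∀ i, 0 < d i)
    (dL : Fin n → ℝ)
    (hdL : ∀ i, dL i = if d i ≤ μ - 1 then 0 else (d i - (μ - 1)) / (μ * (1 + d i)))
    (L SWt SX' : Matrix (Fin n) (Fin n) ℝ)
    (hL : L = Q * Matrix.diagonal dL * Qᵀ)
    (hSWt : SWt = ((SX + SW)⁻¹ + L)⁻¹ - SX)
    (hSX' : SX' = SX - (μ - 1)⁻¹ • SWt) :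
    SX' * L = 0 ∧ L * SX' = 0 := by
  replace hdL : dL = fun i => shrink μ (d i) := funext hdL
  have hQinv : Q⁻¹ * Qᵀᵀ = 1 := by rw [transpose_transpose, nonsing_inv_mul Q hQ]
  have hQtinv : Qᵀ * Q⁻¹ᵀ = 1 := by rw [← transpose_mul, nonsing_inv_mul Q hQ, transpose_one]
  set m : Fin n → ℝ := fun i => max (1 + d i)⁻¹ μ⁻¹
  replace hL : L = congrDiagonal Qᵀ dL := by rw [hL, congrDiagonal_apply, transpose_transpose]
  have hSX : SX = congrDiagonal Q⁻¹ 1 :=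
    eq_congrDiagonal_of_transpose_mul_mul_eq (mul_nonsing_inv Q hQ) (hQX.trans diagonal_one.symm)
  have hSW : SW = congrDiagonal Q⁻¹ d :=
    eq_congrDiagonal_of_transpose_mul_mul_eq (mul_nonsing_inv Q hQ) hQW
  have hA : (SX + SW)⁻¹ + L = congrDiagonal Qᵀ m := by
    have hd1 : ∀ i, (1 + d) i ≠ 0 := fun i => (add_pos one_pos (hd i)).ne'
    rw [hSX, hSW, ← map_add, inv_congrDiagonal hQinv hd1, hL, ← map_add, hdL]
    exact congrArg _ (funext fun i => inv_one_add_add_shrink (by linarith) (by linarith [hd i]))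
  have hSX'c : SX' = congrDiagonal Q⁻¹ (fun i => (μ - 1)⁻¹ * (μ - (m i)⁻¹)) := by
    rw [hSX', hSWt, hA, inv_congrDiagonal hQtinv (fun i => by positivity), hSX, ← map_sub,
      ← map_smul, ← map_sub]
    congr 1
    funext i
    have : μ - 1 ≠ 0 := by linarith
    simp only [Pi.sub_apply, Pi.one_apply, Pi.smul_apply, Pi.inv_apply, smul_eq_mul]
    field_simp
    ring
  have hcdL : (fun i => (μ - 1)⁻¹ * (μ - (m i)⁻¹)) * dL = 0 := by
    funext i
    rw [Pi.mul_apply, mul_assoc, hdL]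
    exact mul_eq_zero_of_right _ (sub_inv_max_mul_shrink_eq_zero (by linarith))
  rw [hSX'c, hL]
  exact ⟨congrDiagonal_mul_congrDiagonal_eq_zero hQinv hcdL,
    congrDiagonal_mul_congrDiagonal_eq_zero hQtinv (by rw [mul_comm, hcdL])⟩

theorem stmt_11 (n : ℕ) (SX SW Q : Matrix (Fin n) (Fin n) ℝ) (d : Fin n → ℝ)
    (hX : SX.PosDef) (hW : SW.PosDef) (μ : ℝ) (hμ : 1 < μ)
    (hQ : IsUnit Q.det) (hQX : Qᵀ * SX * Q = 1)
    (hQW : Qᵀ * SW * Q = Matrix.diagonal d) (hd : ∀ i, 0 < d i)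
    (dL : Fin n → ℝ)
    (hdL : ∀ i, dL i = if d i ≤ μ - 1 then 0 else (d i - (μ - 1)) / (μ * (1 + d i)))
    (L SWt SX' : Matrix (Fin n) (Fin n) ℝ)
    (hL : L = Q * Matrix.diagonal dL * Qᵀ)
    (hSWt : SWt = ((SX + SW)⁻¹ + L)⁻¹ - SX)
    (hSX' : SX' = SX - (μ - 1)⁻¹ • SWt) :
    SX' * L = 0 ∧ L * SX' = 0 :=
  stmt_11_general n SX SW Q d μ hμ hQ hQX hQW hd dL hdL L SWt SX' hL hSWt hSX'
end

section
/- Let Σ_W ≻ 0 and Σ_Ṽ ≻ 0 be n×n matrices and μ > 1. Let Q be non-singular with Qᵀ·Σ_W·Q = D_W diagonal (entries d_i > 0) and Qᵀ·Σ_Ṽ·Q = I. Define diagonal D_K with d_{K,i} = 0 if d_i ≤ (μ−1)⁻¹ and d_{K,i} = (μ−1) − 1/d_i otherwise, and K = Q·D_K·Qᵀ. Then K ⪰ 0, Σ_W⁻¹ + K ⪰ (μ−1)·Σ_Ṽ⁻¹, and with Σ_W̃ = (Σ_W⁻¹ + K)⁻¹ and Σ_{X*} = (μ−1)⁻¹Σ_Ṽ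 − Σ_W̃ one has K·Σ_{X*} = Σ_{X*}·K = 0. -/
/-!
Congruence by `Q` diagonalises `Σ_W`, `Σ_Ṽ` and `K` simultaneously, and every matrix in the
statement is `Q D Qᵀ` or `Qᵀ⁻¹ D Q⁻¹` for a diagonal `D`. The claims thus reduce to the scalar
water-filling identities for each eigen-direction: `d_K ≥ 0`, the topped-up precision
`1/d + d_K` is at least `μ - 1`, and either `d_K = 0` or `1/d + d_K = μ - 1`, so that
`d_K · ((μ - 1)⁻¹ - (1/d + d_K)⁻¹) = 0`.
-/

open Matrix

/-- The amount that tops the precision `1 / x` up to `c` when it falls short; the statement's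
`dK i` is `waterFilling (μ - 1) (d i)`. -/
noncomputable def waterFilling (c x : ℝ) : ℝ :=
  if x ≤ c⁻¹ then 0 else c - 1 / x

section WaterFilling

variable {c x : ℝ}

lemma waterFilling_nonneg (hc : 0 < c) : 0 ≤ waterFilling c x := by
  unfold waterFilling
  split_ifs with h
  · rfl
  · rw [one_div, sub_nonneg]
    exact (inv_le_comm₀ (lt_trans (inv_pos.2 hc) (not_le.1 h)) hc).2 (not_le.1 h).le

lemma le_inv_add_waterFilling (hc : 0 < c) (hx : 0 < x) : c ≤ x⁻¹ + waterFilling c x := by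
  unfold waterFilling
  split_ifs with h
  · simpa using (le_inv_comm₀ hx hc).1 h
  · rw [one_div, add_sub_cancel]

lemma waterFilling_eq_zero_or (c x : ℝ) :
    waterFilling c x = 0 ∨ x⁻¹ + waterFilling c x = c := by
  unfold waterFilling
  split_ifs
  · exact .inl rfl
  · exact .inr (by rw [one_div, add_sub_cancel])

lemma waterFilling_mul_inv_sub_inv_eq_zero (c x : ℝ) :
    waterFilling c x * (c⁻¹ - (x⁻¹ + waterFilling c x)⁻¹) = 0 := by
  rcases waterFilling_eq_zero_or c x with h | h <;> simp [h]

end WaterFilling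

namespace Matrix

variable {m R : Type*} [Fintype m] [DecidableEq m]

lemma inv_diagonal_of_ne_zero [Field R] {v : m → R} (hv : ∀ i, v i ≠ 0) :
    (diagonal v)⁻¹ = diagonal v⁻¹ := by
  refine inv_eq_right_inv ?_
  rw [diagonal_mul_diagonal, ← diagonal_one]
  exact congrArg diagonal (funext fun i => mul_inv_cancel₀ (hv i))

variable [CommRing R] {Q A B : Matrix m m R}

lemma inv_mul_mul_transpose (D : Matrix m m R) : (Q * D * Qᵀ)⁻¹ = Qᵀ⁻¹ * D⁻¹ * Q⁻¹ := by
  rw [mul_inv_rev, mul_inv_rev, Matrix.mul_assoc]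

variable [Invertible Q]

lemma eq_of_transpose_mul_mul_eq (h : Qᵀ * A * Q = B) : A = Qᵀ⁻¹ * B * Q⁻¹ := by
  have := Q.invertibleTranspose
  rw [← h]
  simp only [Matrix.mul_assoc, mul_inv_of_invertible, Matrix.mul_one,
    inv_mul_cancel_left_of_invertible]

lemma inv_eq_of_transpose_mul_mul_eq (h : Qᵀ * A * Q = B) : A⁻¹ = Q * B⁻¹ * Qᵀ := by
  have := Q.invertibleTranspose
  rw [eq_of_transpose_mul_mul_eq h, mul_inv_rev, mul_inv_rev, inv_inv_of_invertible,
    inv_inv_of_invertible, Matrix.mul_assoc]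

lemma mul_mul_transpose_mul_transpose_inv_mul_mul_inv (D E : Matrix m m R) :
    (Q * D * Qᵀ) * (Qᵀ⁻¹ * E * Q⁻¹) = Q * (D * E) * Q⁻¹ := by
  have := Q.invertibleTranspose
  simp only [Matrix.mul_assoc, mul_inv_cancel_left_of_invertible]

lemma transpose_inv_mul_mul_inv_mul_mul_mul_transpose (D E : Matrix m m R) :
    (Qᵀ⁻¹ * E * Q⁻¹) * (Q * D * Qᵀ) = Qᵀ⁻¹ * (E * D) * Qᵀ := by
  simp only [Matrix.mul_assoc, inv_mul_cancel_left_of_invertible]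

end Matrix

theorem stmt_12_general (n : ℕ) (SW SV Q : Matrix (Fin n) (Fin n) ℝ) (d : Fin n → ℝ)
    (μ : ℝ) (hμ : 1 < μ)
    (hQ : IsUnit Q.det) (hQW : Qᵀ * SW * Q = Matrix.diagonal d)
    (hQV : Qᵀ * SV * Q = 1) (hd : ∀ i, 0 < d i)
    (dK : Fin n → ℝ)
    (hdK : ∀ i, dK i = if d i ≤ (μ - 1)⁻¹ then 0 else (μ - 1) - 1 / d i)
    (K SWt SXs : Matrix (Fin n) (Fin n) ℝ)
    (hK : K = Q * Matrix.diagonal dK * Qᵀ)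
    (hSWt : SWt = (SW⁻¹ + K)⁻¹)
    (hSXs : SXs = (μ - 1)⁻¹ • SV - SWt) :
    K.PosSemidef ∧ (SW⁻¹ + K - (μ - 1) • SV⁻¹).PosSemidef ∧
      K * SXs = 0 ∧ SXs * K = 0 := by
  obtain rfl : dK = fun i => waterFilling (μ - 1) (d i) := funext hdK
  set c := μ - 1
  have hc : 0 < c := sub_pos.2 hμ
  have := Q.invertibleOfIsUnitDet hQ
  set f : Fin n → ℝ := fun i => (d i)⁻¹ + waterFilling c (d i)
  have hcf : ∀ i, c ≤ f i := fun i => le_inv_add_waterFilling hc (hd i)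
  have hSWinv : SW⁻¹ = Q * diagonal d⁻¹ * Qᵀ := by
    rw [inv_eq_of_transpose_mul_mul_eq hQW, inv_diagonal_of_ne_zero fun i => (hd i).ne']
  have hSVinv : c • SV⁻¹ = Q * diagonal (fun _ => c) * Qᵀ := by
    rw [inv_eq_of_transpose_mul_mul_eq hQV, inv_one, ← smul_one_eq_diagonal, Matrix.mul_smul,
      Matrix.smul_mul]
  have hsum : SW⁻¹ + K = Q * diagonal f * Qᵀ := by
    rw [hSWinv, hK, ← Matrix.add_mul, ← Matrix.mul_add, diagonal_add]
    rfl
  have hSV : c⁻¹ • SV = Qᵀ⁻¹ * diagonal (fun _ => c⁻¹) * Q⁻¹ := by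
    rw [eq_of_transpose_mul_mul_eq hQV, ← smul_one_eq_diagonal, Matrix.mul_smul, Matrix.smul_mul]
  have hSXs' : SXs = Qᵀ⁻¹ * diagonal (fun i => c⁻¹ - (f i)⁻¹) * Q⁻¹ := by
    rw [hSXs, hSWt, hsum, inv_mul_mul_transpose,
      inv_diagonal_of_ne_zero fun i => (hc.trans_le (hcf i)).ne', hSV, ← Matrix.sub_mul,
      ← Matrix.mul_sub, diagonal_sub]
    rfl
  have hannihil : diagonal (fun i => waterFilling c (d i)) * diagonal (fun i => c⁻¹ - (f i)⁻¹)
      = 0 := by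
    rw [diagonal_mul_diagonal, ← diagonal_zero]
    exact congrArg diagonal (funext fun i => waterFilling_mul_inv_sub_inv_eq_zero c (d i))
  refine ⟨?_, ?_, ?_, ?_⟩
  · rw [hK]
    exact (posSemidef_diagonal_iff.2 fun i => waterFilling_nonneg hc).mul_mul_conjTranspose_same Q
  · rw [hsum, hSVinv, ← Matrix.sub_mul, ← Matrix.mul_sub, diagonal_sub]
    exact (posSemidef_diagonal_iff.2 fun i => sub_nonneg.2 (hcf i)).mul_mul_conjTranspose_same Q
  · rw [hK, hSXs', mul_mul_transpose_mul_transpose_inv_mul_mul_inv, hannihil,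
      Matrix.mul_zero, Matrix.zero_mul]
  · rw [hK, hSXs', transpose_inv_mul_mul_inv_mul_mul_mul_transpose, ← (commute_diagonal _ _).eq,
      hannihil, Matrix.mul_zero, Matrix.zero_mul]

theorem stmt_12 (n : ℕ) (SW SV Q : Matrix (Fin n) (Fin n) ℝ) (d : Fin n → ℝ)
    (hW : SW.PosDef) (hV : SV.PosDef) (μ : ℝ) (hμ : 1 < μ)
    (hQ : IsUnit Q.det) (hQW : Qᵀ * SW * Q = Matrix.diagonal d)
    (hQV : Qᵀ * SV * Q = 1) (hd : ∀ i, 0 < d i)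
    (dK : Fin n → ℝ)
    (hdK : ∀ i, dK i = if d i ≤ (μ - 1)⁻¹ then 0 else (μ - 1) - 1 / d i)
    (K SWt SXs : Matrix (Fin n) (Fin n) ℝ)
    (hK : K = Q * Matrix.diagonal dK * Qᵀ)
    (hSWt : SWt = (SW⁻¹ + K)⁻¹)
    (hSXs : SXs = (μ - 1)⁻¹ • SV - SWt) :
    K.PosSemidef ∧ (SW⁻¹ + K - (μ - 1) • SV⁻¹).PosSemidef ∧
      K * SXs = 0 ∧ SXs * K = 0 :=
  stmt_12_general n SW SV Q d μ hμ hQ hQW hQV hd dK hdK K SWt SXs hK hSWt hSXs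
end
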